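/- Under the same hypotheses (π orthogonal projection commuting with the invertible symmetric operator Δ_N), solutions of the projected Euler–Zeitlin equation dW̄/dt = π[P̄, W̄], Δ_N P̄ = W̄, with initial data in range(π), conserve the energy H(W̄) = ½ tr(P̄ W̄). -/

import Mathlib

open Matrix

attribute [local instance] Matrix.normedAddCommGroup Matrix.normedSpace

/-! Differentiating, `d/dt tr(P W) = tr(P' W) + tr(P W')`. Symmetry of `Δ_N` turns the first term
into the second. Since `W`, and with it `P = Δ_N⁻¹ W`, stays in the range of `π`, symmetry of `π`
gives `tr(P W') = tr(P [P, W]) = 0`. -/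

theorem HasDerivAt.matrix_trace_mul {n : Type*} [Fintype n]
    {𝕜 : Type*} [NontriviallyNormedField 𝕜] [CompleteSpace 𝕜]
    {α : Type*} [NormedRing α] [NormedAlgebra 𝕜 α] [FiniteDimensional 𝕜 α]
    {A B : 𝕜 → Matrix n n α} {A' B' : Matrix n n α} {t : 𝕜}
    (hA : HasDerivAt A A' t) (hB : HasDerivAt B B' t) :
    HasDerivAt (fun s => trace (A s * B s)) (trace (A t * B') + trace (A' * B t)) t :=
  ((LinearMap.mul 𝕜 (Matrix n n α)).compr₂ (traceLinearMap n 𝕜 α)).toContinuousBilinearMap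
    |>.hasDerivAt_of_bilinear (fun _ => hA) (fun _ => hB)

theorem LinearMap.hasDerivAt_comp {𝕜 E F : Type*} [NontriviallyNormedField 𝕜] [CompleteSpace 𝕜]
    [NormedAddCommGroup E] [NormedSpace 𝕜 E] [FiniteDimensional 𝕜 E]
    [NormedAddCommGroup F] [NormedSpace 𝕜 F] (f : E →ₗ[𝕜] F) {W : 𝕜 → E} {W' : E} {t : 𝕜}
    (hW : HasDerivAt W W' t) : HasDerivAt (fun s => f (W s)) (f W') t :=
  (LinearMap.toContinuousLinearMap f).hasFDerivAt.comp_hasDerivAt t hW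

theorem HasDerivAt.of_bijective_linearMap {𝕜 E F : Type*} [NontriviallyNormedField 𝕜]
    [CompleteSpace 𝕜] [NormedAddCommGroup E] [NormedSpace 𝕜 E]
    [NormedAddCommGroup F] [NormedSpace 𝕜 F] [FiniteDimensional 𝕜 F]
    {D : E →ₗ[𝕜] F} (hD : Function.Bijective D)
    {P : 𝕜 → E} {W : 𝕜 → F} (hPW : ∀ s, D (P s) = W s) {P' : E} {t : 𝕜}
    (hW : HasDerivAt W (D P') t) : HasDerivAt P P' t := by
  let e := LinearEquiv.ofBijective D hD
  have hP : P = fun s => e.symm.toLinearMap (W s) := funext fun s => by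
    simp [e, ← hPW s]
  simpa [hP, e] using e.symm.toLinearMap.hasDerivAt_comp hW

theorem LinearMap.apply_eq_self_of_hasDerivAt_apply {E : Type*} [NormedAddCommGroup E]
    [NormedSpace ℝ E] [FiniteDimensional ℝ E] {p : E →ₗ[ℝ] E}
    (hp : ∀ x, p (p x) = p x) {W F : ℝ → E} (hW : ∀ t, HasDerivAt W (p (F t)) t)
    (h0 : p (W 0) = W 0) (t : ℝ) : p (W t) = W t := by
  have hderiv : ∀ s, HasDerivAt (fun r => p (W r) - W r) 0 s := fun s => by
    simpa only [hp, sub_self] using (p.hasDerivAt_comp (hW s)).fun_sub (hW s)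
  have hconst := is_const_of_deriv_eq_zero (fun s => (hderiv s).differentiableAt)
    (fun s => (hderiv s).deriv) t 0
  rwa [h0, sub_self, sub_eq_zero] at hconst

theorem Matrix.trace_mul_commutator_self {n R : Type*} [Fintype n] [CommRing R]
    (A B : Matrix n n R) : trace (A * (A * B - B * A)) = 0 := by
  rw [mul_sub, trace_sub, ← mul_assoc, ← mul_assoc, trace_mul_cycle A B A, sub_self]

theorem projected_energy_conserved_general (N : ℕ)
    (p D : Matrix (Fin N) (Fin N) ℂ →ₗ[ℝ] Matrix (Fin N) (Fin N) ℂ)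
    (hproj : ∀ A, p (p A) = p A)
    (hpsym : ∀ A B : Matrix (Fin N) (Fin N) ℂ,
      -Matrix.trace (p A * B) = -Matrix.trace (A * p B))
    (hDbij : Function.Bijective D)
    (hDsym : ∀ A B : Matrix (Fin N) (Fin N) ℂ,
      -Matrix.trace (A * D B) = -Matrix.trace (D A * B))
    (hcomm : ∀ A, D (p A) = p (D A))
    (W P : ℝ → Matrix (Fin N) (Fin N) ℂ)
    (hrange0 : p (W 0) = W 0)
    (hPoisson : ∀ t, D (P t) = W t)
    (hODE : ∀ t, HasDerivAt W (p (P t * W t - W t * P t)) t) :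
    ∀ t, HasDerivAt (fun s => (1 / 2 : ℂ) * Matrix.trace (P s * W s)) 0 t := by
  intro t
  have hWp := p.apply_eq_self_of_hasDerivAt_apply hproj hODE hrange0
  have hPp : p (P t) = P t := hDbij.injective (by rw [hcomm, hPoisson, hWp])
  set W' := p (P t * W t - W t * P t)
  obtain ⟨P', hP'⟩ := hDbij.surjective W'
  have hPderiv : HasDerivAt P P' t :=
    HasDerivAt.of_bijective_linearMap hDbij hPoisson (hP' ▸ hODE t)
  have hsym : trace (P' * W t) = trace (P t * W') := by
    rw [← hPoisson, neg_inj.mp (hDsym P' (P t)), hP', trace_mul_comm]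
  have hcasimir : trace (P t * W') = 0 := by
    rw [← neg_inj.mp (hpsym (P t) _), hPp, trace_mul_commutator_self]
  have hH := (hPderiv.matrix_trace_mul (hODE t)).const_mul (1 / 2 : ℂ)
  rwa [hsym, hcasimir, add_zero, mul_zero] at hH

/-- Let `π` be an orthogonal projection on `su(N)` for `⟨A,B⟩ = -tr(A*B)` and let `Δ_N`
be an invertible symmetric operator commuting with `π`.  If `W̄` solves the projected
Euler–Zeitlin equation `dW̄/dt = π[P̄,W̄]`, `Δ_N P̄ = W̄`, with initial data in the range of `π`,
then the energy `H(W̄) = ½ tr(P̄ W̄)` is conserved. -/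
theorem projected_energy_conserved (N : ℕ)
    (p D : Matrix (Fin N) (Fin N) ℂ →ₗ[ℝ] Matrix (Fin N) (Fin N) ℂ)
    (hproj : ∀ A, p (p A) = p A)
    (hpsym : ∀ A B : Matrix (Fin N) (Fin N) ℂ,
      -Matrix.trace (p A * B) = -Matrix.trace (A * p B))
    (hDbij : Function.Bijective D)
    (hDsym : ∀ A B : Matrix (Fin N) (Fin N) ℂ,
      -Matrix.trace (A * D B) = -Matrix.trace (D A * B))
    (hcomm : ∀ A, D (p A) = p (D A))
    (W P : ℝ → Matrix (Fin N) (Fin N) ℂ)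
    (hsu : ∀ t, (W t)ᴴ = -(W t) ∧ Matrix.trace (W t) = 0)
    (hrange0 : p (W 0) = W 0)
    (hPoisson : ∀ t, D (P t) = W t)
    (hODE : ∀ t, HasDerivAt W (p (P t * W t - W t * P t)) t) :
    ∀ t, HasDerivAt (fun s => (1 / 2 : ℂ) * Matrix.trace (P s * W s)) 0 t :=
  projected_energy_conserved_general N p D hproj hpsym hDbij hDsym hcomm W P hrange0 hPoisson hODE
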